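/- Let m > 10, set M = 10^{100} m, and let X be a graph satisfying condition (♯,m). Let S_1, S_2 be geodesic circles in X with length(S_1) ≥ M/10 and length(S_2) ≥ M/10, and suppose there is s ∈ S_1 with d(s,S_2) ≥ M/100. If a,b ∈ S_1 satisfy d(a,S_2) ≤ 10m and d(b,S_2) ≤ 10m, then d(a,b) ≤ 30m. -/
import Mathlib


universe u v

/-- A *geodesic* metric space: any two points are joined by a geodesic, i.e. an
isometric embedding of the real interval `[0, dist x y]` sending the endpoints
to the given points. -/
def GeodesicSpace (X : Type u) [MetricSpace X] : Prop :=
  ∀ x y : X, ∃ f : ℝ → X, f 0 = x ∧ f (dist x y) = y ∧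
    ∀ s ∈ Set.Icc (0 : ℝ) (dist x y), ∀ t ∈ Set.Icc (0 : ℝ) (dist x y),
      dist (f s) (f t) = |s - t|

/-- A *simple closed curve* in a topological space: the image of the circle
under an injective continuous map. -/
def IsSimpleClosedCurve {X : Type u} [TopologicalSpace X] (S : Set X) : Prop :=
  ∃ f : AddCircle (1 : ℝ) → X, Continuous f ∧ Function.Injective f ∧ Set.range f = S

/-- A *cactus*: a geodesic metric space in which any two distinct simple closed
curves intersect in at most one point. -/
def IsCactus (C : Type u) [MetricSpace C] : Prop :=
  GeodesicSpace C ∧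
    ∀ S₁ S₂ : Set C, IsSimpleClosedCurve S₁ → IsSimpleClosedCurve S₂ → S₁ ≠ S₂ →
      (S₁ ∩ S₂).Subsingleton

/-- `f : X → Y` is a `(K, L)`-quasi-isometry:
`(1/K) d(x,x') - L ≤ d(f x, f x') ≤ K d(x,x') + L` and every point of `Y` is
within distance `L` of the image. -/
def IsQuasiIsometry {X : Type u} {Y : Type v} [MetricSpace X] [MetricSpace Y]
    (K L : ℝ) (f : X → Y) : Prop :=
  1 ≤ K ∧ 0 ≤ L ∧
    (∀ x x' : X,
      (1 / K) * dist x x' - L ≤ dist (f x) (f x') ∧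
        dist (f x) (f x') ≤ K * dist x x' + L) ∧
    ∀ y : Y, ∃ x : X, dist y (f x) ≤ L

/-- `X` is `(K, L)`-quasi-isometric to some cactus. -/
def IsQuasiIsometricToCactusWith (X : Type u) [iX : MetricSpace X] (K L : ℝ) : Prop :=
  ∃ (C : Type u) (iC : MetricSpace C), @IsCactus C iC ∧
    ∃ f : X → C, @IsQuasiIsometry X C iX iC K L f

/-- `X` is quasi-isometric to some cactus. -/
def QuasiIsometricToCactus (X : Type u) [MetricSpace X] : Prop :=
  ∃ K L : ℝ, IsQuasiIsometricToCactusWith X K L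

/-- Condition `(♯, m)`: for any `x, y` with `d(x,y) ≥ 10 m` there are points
`a, b` with `d(x, {a,b}) ≥ 4m`, `d(y, {a,b}) ≥ 4m` such that `x` and `y` lie in
distinct connected components of `X \ N_m({a,b})`, where
`N_m(A) = {x | d(x,A) < m}` is the open `m`-neighbourhood (`Metric.thickening`). -/
def SharpCondition (X : Type u) [MetricSpace X] (m : ℝ) : Prop :=
  ∀ x y : X, 10 * m ≤ dist x y →
    ∃ a b : X,
      4 * m ≤ Metric.infDist x ({a, b} : Set X) ∧
      4 * m ≤ Metric.infDist y ({a, b} : Set X) ∧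
      connectedComponentIn (Metric.thickening m ({a, b} : Set X))ᶜ x ≠
        connectedComponentIn (Metric.thickening m ({a, b} : Set X))ᶜ y

/-- A *theta curve* in `X`: a continuous map from the theta graph
(the unit circle together with a diameter) to `X`.  It is encoded by its
restrictions to the three arcs joining the endpoints `a, b` of the diameter,
i.e. by three continuous paths `p 0, p 1, p 2 : [0,1] → X` from `a` to `b`. -/
structure ThetaCurve (X : Type u) [MetricSpace X] where
  a : X
  b : X
  p : Fin 3 → ℝ → X
  cont : ∀ i, ContinuousOn (p i) (Set.Icc 0 1)
  map_zero : ∀ i, p i 0 = a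
  map_one : ∀ i, p i 1 = b

/-- The theta curve is *`M`-fat*: there are subarcs `α i ∋ a` and `β i ∋ b` of
the arc `p i` (images of subintervals `[0, s i]`, `[t i, 1]`) such that, with
`p' i = p i \ (α i ∪ β i)`:
(1) each `p' i` is nonempty and `d(u,v) ≥ M` for `u ∈ p' i`, `v ∈ p' j`, `i ≠ j`;
(2) `p' i ∩ α j = ∅` and `p' i ∩ β j = ∅` for all `i, j`;
(3) `d(u,v) ≥ 2M` for all `u ∈ α 0 ∪ α 1 ∪ α 2` and `v ∈ β 0 ∪ β 1 ∪ β 2`. -/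
def ThetaCurve.IsFat {X : Type u} [MetricSpace X] (θ : ThetaCurve X) (M : ℝ) : Prop :=
  ∃ s t : Fin 3 → ℝ,
    (∀ i, s i ∈ Set.Icc (0 : ℝ) 1) ∧ (∀ i, t i ∈ Set.Icc (0 : ℝ) 1) ∧
    let α : Fin 3 → Set X := fun i => θ.p i '' Set.Icc 0 (s i)
    let β : Fin 3 → Set X := fun i => θ.p i '' Set.Icc (t i) 1
    let p' : Fin 3 → Set X := fun i => θ.p i '' Set.Icc 0 1 \ (α i ∪ β i)
    (∀ i, (p' i).Nonempty) ∧
      (∀ i j, i ≠ j → ∀ u ∈ p' i, ∀ v ∈ p' j, M ≤ dist u v) ∧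
      (∀ i j, p' i ∩ α j = ∅ ∧ p' i ∩ β j = ∅) ∧
      (∀ u ∈ α 0 ∪ α 1 ∪ α 2, ∀ v ∈ β 0 ∪ β 1 ∪ β 2, 2 * M ≤ dist u v)

/-- The theta curve is *embedded* (the corresponding map from the theta graph
is injective). -/
def ThetaCurve.Embedded {X : Type u} [MetricSpace X] (θ : ThetaCurve X) : Prop :=
  θ.a ≠ θ.b ∧ (∀ i, Set.InjOn (θ.p i) (Set.Icc 0 1)) ∧
    ∀ i j, i ≠ j →
      (θ.p i '' Set.Icc 0 1) ∩ (θ.p j '' Set.Icc 0 1) ⊆ {θ.a, θ.b}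

/-- `X` contains no `M`-fat theta curve. -/
def HasNoFatTheta (X : Type u) [MetricSpace X] (M : ℝ) : Prop :=
  ¬ ∃ θ : ThetaCurve X, θ.IsFat M

/-- `X` is (isometric to) the metric realization of a connected simplicial graph
with all edges of length `1`, equipped with the path metric: `X` is a geodesic
space which is covered by unit-length geodesic edges whose endpoints lie in a
vertex set `V`, distinct edges meet only in vertices, and distances between
vertices are (combinatorial, hence integer) path distances. -/
def IsMetricGraph (X : Type u) [MetricSpace X] : Prop :=
  GeodesicSpace X ∧
    ∃ (V : Set X) (E : Set (X × X)) (γ : X × X → ℝ → X),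
      (∀ e ∈ E, e.1 ∈ V ∧ e.2 ∈ V ∧ e.1 ≠ e.2) ∧
      (∀ e ∈ E, γ e 0 = e.1 ∧ γ e 1 = e.2 ∧
        ∀ s ∈ Set.Icc (0 : ℝ) 1, ∀ t ∈ Set.Icc (0 : ℝ) 1,
          dist (γ e s) (γ e t) = |s - t|) ∧
      (⋃ e ∈ E, γ e '' Set.Icc (0 : ℝ) 1) = Set.univ ∧
      (∀ e ∈ E, ∀ e' ∈ E, e ≠ e' →
        (γ e '' Set.Icc (0 : ℝ) 1) ∩ (γ e' '' Set.Icc (0 : ℝ) 1) ⊆ V) ∧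
      (∀ v ∈ V, ∀ w ∈ V, ∃ n : ℕ, dist v w = (n : ℝ))

/-- `S ⊆ X` is a *geodesic circle* of length `L`: the image of a circle of
circumference `L` (with its length metric) under an isometric embedding.  The
embedding is encoded by an `L`-periodic parametrization `g : ℝ → X` which is
isometric on arcs of length at most `L/2`.  (Note that, the embedding being
isometric, the length of the shorter arc of `S` between two of its points
equals their distance in `X`.) -/
def IsGeodesicCircle {X : Type u} [MetricSpace X] (S : Set X) (L : ℝ) : Prop :=
  0 < L ∧ ∃ g : ℝ → X, Set.range g = S ∧ (∀ s : ℝ, g (s + L) = g s) ∧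
    ∀ s t : ℝ, |s - t| ≤ L / 2 → dist (g s) (g t) = |s - t|

/-- `Z` is a connected component of the subset `F` (with its subspace topology). -/
def IsCompOf {X : Type u} [TopologicalSpace X] (Z F : Set X) : Prop :=
  ∃ z ∈ F, Z = connectedComponentIn F z

/-- `X` is a *quasi-tree*: it is quasi-isometric to a simplicial tree (with its
combinatorial path metric). -/
def IsQuasiTree (X : Type u) [MetricSpace X] : Prop :=
  ∃ (V : Type u) (T : SimpleGraph V), T.IsTree ∧
    ∃ (f : X → V) (K L : ℝ), 1 ≤ K ∧ 0 ≤ L ∧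
      (∀ x y : X, (1 / K) * dist x y - L ≤ (T.dist (f x) (f y) : ℝ) ∧
        (T.dist (f x) (f y) : ℝ) ≤ K * dist x y + L) ∧
      ∀ v : V, ∃ x : X, (T.dist v (f x) : ℝ) ≤ L

/-- A finite graph embedded in the plane `ℝ²`: a finite union of (injective,
continuous) arcs, any two of which meet only at common endpoints (vertices). -/
def IsFinitePlaneGraph (D : Set (ℝ × ℝ)) : Prop :=
  ∃ (n : ℕ) (e : Fin n → ℝ → ℝ × ℝ),
    (∀ i, ContinuousOn (e i) (Set.Icc 0 1) ∧ Set.InjOn (e i) (Set.Icc 0 1)) ∧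
    D = ⋃ i, e i '' Set.Icc (0 : ℝ) 1 ∧
    ∀ i j, i ≠ j →
      (e i '' Set.Icc (0 : ℝ) 1) ∩ (e j '' Set.Icc (0 : ℝ) 1) ⊆
        ({e i 0, e i 1} ∩ {e j 0, e j 1} : Set (ℝ × ℝ))

/-- `f` (a graph morphism defined on the plane graph `D`) is a *filling* of the
simple closed curve with image `A ⊆ X`. -/
def IsFilling {X : Type u} [MetricSpace X] (D : Set (ℝ × ℝ)) (f : ℝ × ℝ → X)
    (A : Set X) : Prop :=
  IsFinitePlaneGraph D ∧ ContinuousOn f D ∧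
    (∀ U : Set (ℝ × ℝ), IsCompOf U Dᶜ → ¬ Bornology.IsBounded U →
      IsSimpleClosedCurve (frontier U) ∧ f '' frontier U = A) ∧
    (∀ U : Set (ℝ × ℝ), IsCompOf U Dᶜ → Bornology.IsBounded U →
      ∃ L : ℝ, IsGeodesicCircle (f '' frontier U) L)

/-- The path (pseudo-)distance inside a subset `A` of a metric space: the
infimum of the lengths (total variations) of continuous paths in `A` joining
two points. -/
noncomputable def pathDist {P : Type u} [MetricSpace P] (A : Set P) (x y : P) : ENNReal :=
  ⨅ (γ : ℝ → P) (_ : ContinuousOn γ (Set.Icc 0 1)) (_ : Set.MapsTo γ (Set.Icc 0 1) A)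
    (_ : γ 0 = x) (_ : γ 1 = y), eVariationOn γ (Set.Icc 0 1)


private lemma aux_norm {α : Type*} {g : ℝ → α} {L : ℝ} (hL : 0 < L)
    (h : ∀ s, g (s + L) = g s) (t : ℝ) :
    ∃ u, 0 ≤ u ∧ u < L ∧ g u = g t := by
  have hper : Function.Periodic g L := h
  refine ⟨t - (⌊t / L⌋ : ℤ) * L, ?_, ?_, hper.sub_int_mul_eq _⟩
  · have h1 : ((⌊t / L⌋ : ℤ) : ℝ) ≤ t / L := Int.floor_le _
    have h2 := mul_le_mul_of_nonneg_right h1 hL.le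
    rw [div_mul_cancel₀ _ (ne_of_gt hL)] at h2
    linarith
  · have h1 : t / L < (⌊t / L⌋ : ℤ) + 1 := Int.lt_floor_add_one _
    have h2 := mul_lt_mul_of_pos_right h1 hL
    rw [div_mul_cancel₀ _ (ne_of_gt hL)] at h2
    have h3 : (((⌊t / L⌋ : ℤ) : ℝ) + 1) * L = ((⌊t / L⌋ : ℤ) : ℝ) * L + L := by ring
    linarith [h3 ▸ h2]

private lemma aux_cdist {X : Type u} [MetricSpace X] {g : ℝ → X} {L : ℝ}
    (hper : ∀ s, g (s + L) = g s)
    (hiso : ∀ s t, |s - t| ≤ L / 2 → dist (g s) (g t) = |s - t|)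
    {s t : ℝ} (hst : s ≤ t) (h : t - s ≤ L) :
    dist (g s) (g t) = min (t - s) (L - (t - s)) := by
  rcases le_or_gt (t - s) (L / 2) with h1 | h1
  · rw [hiso s t (by rw [abs_sub_comm, abs_of_nonneg (by linarith)]; exact h1)]
    rw [abs_sub_comm, abs_of_nonneg (by linarith), min_eq_left (by linarith)]
  · have h2 : dist (g s) (g t) = dist (g (s + L)) (g t) := by rw [hper]
    rw [h2, hiso (s + L) t (by rw [abs_of_nonneg (by linarith)]; linarith)]
    rw [abs_of_nonneg (by linarith), min_eq_right (by linarith)]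
    ring

private lemma aux_cont {X : Type u} [MetricSpace X] {g : ℝ → X} {L : ℝ} (hL : 0 < L)
    (hiso : ∀ s t, |s - t| ≤ L / 2 → dist (g s) (g t) = |s - t|) : Continuous g := by
  rw [Metric.continuous_iff]
  intro b ε hε
  refine ⟨min ε (L / 2), lt_min hε (by linarith), fun a ha => ?_⟩
  have h1 : |a - b| ≤ L / 2 := by
    rw [← Real.dist_eq]; exact le_of_lt (lt_of_lt_of_le ha (min_le_right _ _))
  rw [hiso a b h1, ← Real.dist_eq]
  exact lt_of_lt_of_le ha (min_le_left _ _)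

private lemma aux_contOn {X : Type u} [MetricSpace X] {f : ℝ → X} {d : ℝ}
    (hiso : ∀ s ∈ Set.Icc (0:ℝ) d, ∀ t ∈ Set.Icc (0:ℝ) d, dist (f s) (f t) = |s - t|) :
    ContinuousOn f (Set.Icc 0 d) := by
  rw [Metric.continuousOn_iff]
  intro b hb ε hε
  exact ⟨ε, hε, fun a ha hab => by rw [hiso a ha b hb, ← Real.dist_eq]; exact hab⟩

private lemma aux_comp {α : Type u} [TopologicalSpace α] {F A : Set α} {x y : α}
    (hA : IsPreconnected A) (hAF : A ⊆ F) (hx : x ∈ A) (hy : y ∈ A) :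
    connectedComponentIn F x = connectedComponentIn F y :=
  connectedComponentIn_eq (hA.subset_connectedComponentIn hx hAF hy)


/-- Lemma: two circles, close points are close together.
Let `m > 10`, `M = 10^100 m`, and let `X` be a graph satisfying `(♯, m)`.  Let
`S₁, S₂` be geodesic circles of length `≥ M/10` such that some `s ∈ S₁` has
`d(s, S₂) ≥ M/100`.  If `a, b ∈ S₁` satisfy `d(a,S₂) ≤ 10m` and
`d(b,S₂) ≤ 10m`, then `d(a,b) ≤ 30m`. -/
theorem circles_close (m : ℝ) (hm : 10 < m) (M : ℝ) (hM : M = 10 ^ 100 * m)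
    (X : Type u) [MetricSpace X] (hX : IsMetricGraph X)
    (hsharp : SharpCondition X m)
    (S₁ S₂ : Set X) (L₁ L₂ : ℝ)
    (hS₁ : IsGeodesicCircle S₁ L₁) (hS₂ : IsGeodesicCircle S₂ L₂)
    (hL₁ : M / 10 ≤ L₁) (hL₂ : M / 10 ≤ L₂)
    (s : X) (hs : s ∈ S₁) (hsd : M / 100 ≤ Metric.infDist s S₂)
    (a b : X) (ha : a ∈ S₁) (hb : b ∈ S₁)
    (hda : Metric.infDist a S₂ ≤ 10 * m) (hdb : Metric.infDist b S₂ ≤ 10 * m) :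
    dist a b ≤ 30 * m := by
  obtain ⟨hgeo, -⟩ := hX
  obtain ⟨hL1pos, g1r, hrg1, hpe1, his1⟩ := hS₁
  obtain ⟨hL2pos, g2r, hrg2, hpe2, his2⟩ := hS₂
  have hm0 : (0:ℝ) < m := by linarith
  -- numeric preliminaries
  have hc100 : (10:ℝ)^100 = 100 * 10^98 := by norm_num
  set c0 : ℝ := (10:ℝ)^98 with hc0
  have hc0ge : (100:ℝ) ≤ c0 := by rw [hc0]; norm_num
  have hcm : 100 * m ≤ c0 * m := mul_le_mul_of_nonneg_right hc0ge hm0.le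
  have hc0m0 : (0:ℝ) ≤ c0 * m := by linarith
  have hM100 : M / 100 = c0 * m := by rw [hM, hc100]; ring
  have hM10' : M / 10 = 10 * (c0 * m) := by rw [hM, hc100]; ring
  have hL₁' : 10 * (c0 * m) ≤ L₁ := by rw [← hM10']; exact hL₁
  set D : ℝ := c0 * m - 10 * m with hD
  have hD0 : 0 < D := by rw [hD]; linarith
  have hD30 : 30 * m < 2 * D := by rw [hD]; linarith
  have h2D : 2 * D ≤ L₁ := by rw [hD]; linarith
  have hsd' : D + 10 * m ≤ Metric.infDist s S₂ := by
    have := hsd; rw [hM100] at this; rw [hD]; linarith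
  -- shift g1 so that g 0 = s
  rw [← hrg1] at hs
  obtain ⟨t0, ht0⟩ := hs
  set g : ℝ → X := fun u => g1r (u + t0) with hgdef
  have hper : ∀ u, g (u + L₁) = g u := by
    intro u
    show g1r (u + L₁ + t0) = g1r (u + t0)
    rw [show u + L₁ + t0 = (u + t0) + L₁ by ring, hpe1]
  have hiso : ∀ u v, |u - v| ≤ L₁ / 2 → dist (g u) (g v) = |u - v| := by
    intro u v h
    have h2 := his1 (u + t0) (v + t0) (by rw [show u + t0 - (v + t0) = u - v by ring]; exact h)
    rw [show u + t0 - (v + t0) = u - v by ring] at h2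
    exact h2
  have hrange : ∀ u, g u ∈ S₁ := fun u => hrg1 ▸ Set.mem_range_self (u + t0)
  have hgs : g 0 = s := by show g1r (0 + t0) = s; rw [zero_add]; exact ht0
  have hgcont : Continuous g := aux_cont hL1pos hiso
  -- contact points have parameters in [D, L₁ - D]
  have hparam : ∀ x, x ∈ S₁ → Metric.infDist x S₂ ≤ 10 * m →
      ∃ t, t ∈ Set.Icc D (L₁ - D) ∧ g t = x := by
    intro x hx hxd
    have hx' : x ∈ Set.range g1r := hrg1.symm ▸ hx
    obtain ⟨r, hr⟩ := hx'
    have hgr : g (r - t0) = x := by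
      show g1r (r - t0 + t0) = x
      rw [show r - t0 + t0 = r by ring]; exact hr
    obtain ⟨u, hu0, huL, hueq⟩ := aux_norm hL1pos hper (r - t0)
    have hgu : g u = x := hueq.trans hgr
    have hsx : D ≤ dist s x := by
      have h1 : Metric.infDist s S₂ ≤ Metric.infDist x S₂ + dist s x :=
        Metric.infDist_le_infDist_add_dist
      linarith
    have hdsx : dist s x = min u (L₁ - u) := by
      rw [← hgs, ← hgu]
      have := aux_cdist hper hiso hu0 (by linarith : u - 0 ≤ L₁)
      simpa using this
    rw [hdsx] at hsx
    exact ⟨u, ⟨le_trans hsx (min_le_left _ _),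
      by linarith [le_trans hsx (min_le_right u (L₁ - u))]⟩, hgu⟩
  -- the contact parameter set
  set T : Set ℝ := {t | t ∈ Set.Icc D (L₁ - D) ∧ Metric.infDist (g t) S₂ ≤ 10 * m} with hT
  obtain ⟨ta, hta, hgta⟩ := hparam a ha hda
  obtain ⟨tb, htb, hgtb⟩ := hparam b hb hdb
  have htaT : ta ∈ T := ⟨hta, by rw [hgta]; exact hda⟩
  have htbT : tb ∈ T := ⟨htb, by rw [hgtb]; exact hdb⟩
  have hTne : T.Nonempty := ⟨ta, htaT⟩
  have hTbb : BddBelow T := ⟨D, fun t ht => ht.1.1⟩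
  have hTba : BddAbove T := ⟨L₁ - D, fun t ht => ht.1.2⟩
  have hTclosed : IsClosed T := by
    have : T = Set.Icc D (L₁ - D) ∩ {t | Metric.infDist (g t) S₂ ≤ 10 * m} := rfl
    rw [this]
    exact isClosed_Icc.inter
      (isClosed_le ((Metric.continuous_infDist_pt S₂).comp hgcont) continuous_const)
  set t1 : ℝ := sInf T with ht1
  set t2 : ℝ := sSup T with ht2
  have ht1T : t1 ∈ T := hTclosed.csInf_mem hTne hTbb
  have ht2T : t2 ∈ T := hTclosed.csSup_mem hTne hTba
  have ht1a : t1 ≤ ta := csInf_le hTbb htaT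
  have ht2a : ta ≤ t2 := le_csSup hTba htaT
  have ht1b : t1 ≤ tb := csInf_le hTbb htbT
  have ht2b : tb ≤ t2 := le_csSup hTba htbT
  have ht1D : D ≤ t1 := ht1T.1.1
  have ht2D : t2 ≤ L₁ - D := ht2T.1.2
  -- reduce to t2 - t1 ≤ 30 m
  suffices hkey : t2 - t1 ≤ 30 * m by
    rw [← hgta, ← hgtb]
    rcases le_total ta tb with h | h
    · rw [aux_cdist hper hiso h (by linarith [hta.1, htb.2])]
      have := min_le_left (tb - ta) (L₁ - (tb - ta))
      linarith
    · rw [dist_comm, aux_cdist hper hiso h (by linarith [htb.1, hta.2])]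
      have := min_le_left (ta - tb) (L₁ - (ta - tb))
      linarith
  by_contra hcon
  push_neg at hcon
  -- p and q
  have ht12 : t1 ≤ t2 := le_trans ht1a ht2a
  have hpq : 30 * m < dist (g t1) (g t2) := by
    rw [aux_cdist hper hiso ht12 (by linarith)]
    exact lt_min hcon (by linarith)
  -- S₂ compact and nonempty, nearest points
  have hS2compact : IsCompact S₂ := by
    have hEq : S₂ = g2r '' Set.Icc 0 L₂ := by
      apply Set.Subset.antisymm
      · rw [← hrg2]
        rintro x ⟨r, rfl⟩
        obtain ⟨u, hu0, huL, hueq⟩ := aux_norm hL2pos hpe2 r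
        exact ⟨u, ⟨hu0, huL.le⟩, hueq⟩
      · rintro x ⟨u, -, rfl⟩
        exact hrg2 ▸ Set.mem_range_self _
    rw [hEq]
    exact isCompact_Icc.image (aux_cont hL2pos his2)
  have hS2ne : S₂.Nonempty := hrg2 ▸ Set.range_nonempty _
  obtain ⟨p', hp'S, hp'd⟩ := hS2compact.exists_infDist_eq_dist hS2ne (g t1)
  obtain ⟨q', hq'S, hq'd⟩ := hS2compact.exists_infDist_eq_dist hS2ne (g t2)
  have hpp' : dist (g t1) p' ≤ 10 * m := by rw [← hp'd]; exact ht1T.2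
  have hqq' : dist (g t2) q' ≤ 10 * m := by rw [← hq'd]; exact ht2T.2
  have hp'q' : 10 * m ≤ dist p' q' := by
    have h4 := dist_triangle4 (g t1) p' q' (g t2)
    have h5 : dist q' (g t2) = dist (g t2) q' := dist_comm _ _
    linarith
  -- apply the sharp condition at (p', q')
  obtain ⟨cc, dd, h4p, h4q, hne⟩ := hsharp p' q' hp'q'
  have h4p' : ∀ e ∈ ({cc, dd} : Set X), 4 * m ≤ dist p' e :=
    fun e he => le_trans h4p (Metric.infDist_le_dist_of_mem he)
  have h4q' : ∀ e ∈ ({cc, dd} : Set X), 4 * m ≤ dist q' e :=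
    fun e he => le_trans h4q (Metric.infDist_le_dist_of_mem he)
  set W : Set X := Metric.thickening m ({cc, dd} : Set X) with hW
  -- shift g2 so that g2 0 = p'
  have hp'r : p' ∈ Set.range g2r := hrg2.symm ▸ hp'S
  obtain ⟨u0, hu0⟩ := hp'r
  set g2 : ℝ → X := fun u => g2r (u + u0) with hg2def
  have hper2 : ∀ u, g2 (u + L₂) = g2 u := by
    intro u
    show g2r (u + L₂ + u0) = g2r (u + u0)
    rw [show u + L₂ + u0 = (u + u0) + L₂ by ring, hpe2]
  have hiso2 : ∀ u v, |u - v| ≤ L₂ / 2 → dist (g2 u) (g2 v) = |u - v| := by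
    intro u v h
    have h2 := his2 (u + u0) (v + u0) (by rw [show u + u0 - (v + u0) = u - v by ring]; exact h)
    rw [show u + u0 - (v + u0) = u - v by ring] at h2
    exact h2
  have hrange2 : ∀ u, g2 u ∈ S₂ := fun u => hrg2 ▸ Set.mem_range_self (u + u0)
  have hg2p' : g2 0 = p' := by show g2r (0 + u0) = p'; rw [zero_add]; exact hu0
  -- parameter for q'
  have hq'r : q' ∈ Set.range g2r := hrg2.symm ▸ hq'S
  obtain ⟨r2, hr2⟩ := hq'r
  have hgq'pre : g2 (r2 - u0) = q' := by
    show g2r (r2 - u0 + u0) = q'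
    rw [show r2 - u0 + u0 = r2 by ring]; exact hr2
  obtain ⟨σ, hσ0, hσL, hσeq⟩ := aux_norm hL2pos hper2 (r2 - u0)
  have hgσ : g2 σ = q' := hσeq.trans hgq'pre
  -- every arc joining p' q' must meet W
  have harc : ∀ A : Set X, IsPreconnected A → p' ∈ A → q' ∈ A → ∃ w ∈ A, w ∈ W := by
    intro A hA hp hq
    by_contra h
    push_neg at h
    exact hne (aux_comp hA (fun x hx => h x hx) hp hq)
  have hg2cont : Continuous g2 := aux_cont hL2pos hiso2
  obtain ⟨w1, hw1A, hw1W⟩ := harc (g2 '' Set.Icc 0 σ)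
    (isPreconnected_Icc.image _ hg2cont.continuousOn)
    ⟨0, ⟨le_refl 0, hσ0⟩, hg2p'⟩ ⟨σ, ⟨hσ0, le_refl σ⟩, hgσ⟩
  obtain ⟨w2, hw2A, hw2W⟩ := harc (g2 '' Set.Icc σ L₂)
    (isPreconnected_Icc.image _ hg2cont.continuousOn)
    ⟨L₂, ⟨hσL.le, le_refl L₂⟩, by
        have := hper2 0; rw [zero_add] at this; rw [this]; exact hg2p'⟩
    ⟨σ, ⟨le_refl σ, hσL.le⟩, hgσ⟩
  obtain ⟨α, hα, hgα⟩ := hw1A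
  obtain ⟨β, hβ, hgβ⟩ := hw2A
  obtain ⟨e1, he1m, he1d⟩ := Metric.mem_thickening_iff.1 hw1W
  obtain ⟨e2, he2m, he2d⟩ := Metric.mem_thickening_iff.1 hw2W
  -- both cut points are m-close to S₂
  have hαβ : α ≤ β := le_trans hα.2 hβ.1
  have hw1q' : dist w1 q' ≤ σ - α := by
    rw [← hgα, ← hgσ, aux_cdist hper2 hiso2 hα.2 (by linarith [hα.1, hσL.le])]
    exact min_le_left _ _
  have hw1p' : dist w1 p' ≤ α := by
    rw [← hgα, ← hg2p', dist_comm]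
    have := aux_cdist hper2 hiso2 hα.1 (by linarith [hα.1, hα.2, hσL.le] : α - 0 ≤ L₂)
    simp only [sub_zero] at this
    rw [this]
    exact min_le_left _ _
  have hne12 : e1 ≠ e2 := by
    intro he
    have hw12 : dist w1 w2 < 2 * m := by
      have ht := dist_triangle w1 e1 w2
      have h5 : dist e1 w2 = dist w2 e2 := by rw [he, dist_comm]
      linarith
    have hd12 : dist w1 w2 = min (β - α) (L₂ - (β - α)) := by
      rw [← hgα, ← hgβ]
      exact aux_cdist hper2 hiso2 hαβ (by linarith [hα.1, hβ.2])
    rw [hd12] at hw12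
    rcases min_lt_iff.1 hw12 with h6 | h6
    · have h7 : dist q' e1 ≤ dist q' w1 + dist w1 e1 := dist_triangle _ _ _
      have h8 : dist q' w1 = dist w1 q' := dist_comm _ _
      have h9 := h4q' e1 he1m
      have h10 : σ - α ≤ β - α := by linarith [hβ.1]
      linarith
    · have h7 : dist p' e1 ≤ dist p' w1 + dist w1 e1 := dist_triangle _ _ _
      have h8 : dist p' w1 = dist w1 p' := dist_comm _ _
      have h9 := h4p' e1 he1m
      have h10 : α ≤ L₂ - (β - α) := by linarith [hβ.2]
      linarith
  have hkey2 : ∀ e ∈ ({cc, dd} : Set X), ∃ z ∈ S₂, dist e z < m := by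
    intro e he
    have hee : e = e1 ∨ e = e2 := by
      simp only [Set.mem_insert_iff, Set.mem_singleton_iff] at he he1m he2m
      rcases he with rfl | rfl <;> rcases he1m with h1 | h1 <;> rcases he2m with h2 | h2 <;>
        first
          | (left; exact h1.symm)
          | (right; exact h2.symm)
          | (exact absurd (h1.trans h2.symm) hne12)
    rcases hee with rfl | rfl
    · exact ⟨w1, hgα ▸ hrange2 α, by rw [dist_comm]; exact he1d⟩
    · exact ⟨w2, hgβ ▸ hrange2 β, by rw [dist_comm]; exact he2d⟩
  have hWnear : ∀ w ∈ W, Metric.infDist w S₂ < 2 * m ∧ ∃ e ∈ ({cc, dd} : Set X), dist w e < m := by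
    intro w hw
    obtain ⟨e, hem, hed⟩ := Metric.mem_thickening_iff.1 hw
    obtain ⟨z, hzS, hez⟩ := hkey2 e hem
    refine ⟨?_, e, hem, hed⟩
    calc Metric.infDist w S₂ ≤ dist w z := Metric.infDist_le_dist_of_mem hzS
      _ ≤ dist w e + dist e z := dist_triangle _ _ _
      _ < 2 * m := by linarith
  -- connectors avoid W
  have hconn : ∀ x x' : X, x' ∈ S₂ → Metric.infDist x S₂ = dist x x' →
      (4 * m ≤ Metric.infDist x' ({cc, dd} : Set X)) →
      connectedComponentIn Wᶜ x = connectedComponentIn Wᶜ x' := by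
    intro x x' hx'S hnear h4
    obtain ⟨f, hf0, hf1, hfiso⟩ := hgeo x x'
    have hAconn : IsPreconnected (f '' Set.Icc 0 (dist x x')) :=
      isPreconnected_Icc.image _ (aux_contOn hfiso)
    have hAF : f '' Set.Icc 0 (dist x x') ⊆ Wᶜ := by
      rintro w ⟨τ, hτ, rfl⟩
      simp only [Set.mem_compl_iff]
      intro hwW
      obtain ⟨hw2m, e, hem, hed⟩ := hWnear _ hwW
      have hd1 : dist x (f τ) = τ := by
        rw [← hf0, hfiso 0 ⟨le_refl 0, dist_nonneg⟩ τ hτ, zero_sub, abs_neg,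
          abs_of_nonneg hτ.1]
      have hd2 : dist (f τ) x' = dist x x' - τ := by
        have hh := hfiso τ hτ (dist x x') ⟨dist_nonneg, le_refl _⟩
        rw [hf1] at hh
        rw [hh, abs_of_nonpos (by linarith [hτ.2]), neg_sub]
      have h5 : Metric.infDist x S₂ ≤ Metric.infDist (f τ) S₂ + dist x (f τ) :=
        Metric.infDist_le_infDist_add_dist
      have h6 : dist x' e ≤ dist x' (f τ) + dist (f τ) e := dist_triangle _ _ _
      have h7 : dist x' (f τ) = dist (f τ) x' := dist_comm _ _
      have h8 : 4 * m ≤ dist x' e := le_trans h4 (Metric.infDist_le_dist_of_mem hem)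
      rw [hnear] at h5
      linarith
    exact aux_comp hAconn hAF ⟨0, ⟨le_refl 0, dist_nonneg⟩, hf0⟩
      ⟨dist x x', ⟨dist_nonneg, le_refl _⟩, hf1⟩
  have hcp : connectedComponentIn Wᶜ (g t1) = connectedComponentIn Wᶜ p' :=
    hconn (g t1) p' hp'S hp'd h4p
  have hcq : connectedComponentIn Wᶜ (g t2) = connectedComponentIn Wᶜ q' :=
    hconn (g t2) q' hq'S hq'd h4q
  -- endpoints are not in W
  have hendp : ∀ x x' : X, Metric.infDist x S₂ = dist x x' →
      (4 * m ≤ Metric.infDist x' ({cc, dd} : Set X)) → x ∉ W := by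
    intro x x' hnear h4 hxW
    obtain ⟨hw2m, e, hem, hed⟩ := hWnear _ hxW
    have h6 : dist x' e ≤ dist x' x + dist x e := dist_triangle _ _ _
    have h7 : dist x' x = dist x x' := dist_comm _ _
    have h8 : 4 * m ≤ dist x' e := le_trans h4 (Metric.infDist_le_dist_of_mem hem)
    rw [hnear] at hw2m
    linarith
  have hpnW : g t1 ∉ W := hendp _ p' hp'd h4p
  have hqnW : g t2 ∉ W := hendp _ q' hq'd h4q
  -- the arc of S₁ through s avoids W
  have hBF : g '' Set.Icc t2 (t1 + L₁) ⊆ Wᶜ := by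
    rintro w ⟨τ, ⟨hτ1, hτ2⟩, rfl⟩
    simp only [Set.mem_compl_iff]
    intro hwW
    obtain ⟨hw2m, -⟩ := hWnear _ hwW
    rcases le_or_gt τ (L₁ - D) with hc1 | hc1
    · have hτT : τ ∈ T := ⟨⟨le_trans ht2T.1.1 hτ1, hc1⟩, by linarith⟩
      have h5 : τ ≤ t2 := le_csSup hTba hτT
      have hτeq : τ = t2 := le_antisymm h5 hτ1
      rw [hτeq] at hwW
      exact hqnW hwW
    · have hgτ : g τ = g (τ - L₁) := by
        have h5 := hper (τ - L₁)
        rw [show τ - L₁ + L₁ = τ by ring] at h5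
        exact h5
      rcases lt_or_ge τ (L₁ + D) with hc2 | hc2
      · have habs : |(0:ℝ) - (τ - L₁)| ≤ L₁ / 2 := by
          rw [abs_le]
          constructor <;> [skip; skip] <;> linarith
        have hds : dist s (g τ) = |(0:ℝ) - (τ - L₁)| := by
          rw [← hgs, hgτ]
          exact hiso 0 (τ - L₁) habs
        have habs2 : |(0:ℝ) - (τ - L₁)| < D := by
          rw [abs_lt]
          constructor <;> linarith
        have h5 : Metric.infDist s S₂ ≤ Metric.infDist (g τ) S₂ + dist s (g τ) :=
          Metric.infDist_le_infDist_add_dist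
        rw [hds] at h5
        linarith
      · have hτT : τ - L₁ ∈ T := by
          refine ⟨⟨by linarith, by linarith [ht1T.1.2]⟩, ?_⟩
          rw [← hgτ]
          linarith
        have h5 : t1 ≤ τ - L₁ := csInf_le hTbb hτT
        have hτeq : τ - L₁ = t1 := le_antisymm (by linarith) h5
        rw [hgτ, hτeq] at hwW
        exact hpnW hwW
  have hBcomp : connectedComponentIn Wᶜ (g t2) = connectedComponentIn Wᶜ (g t1) :=
    aux_comp (isPreconnected_Icc.image _ hgcont.continuousOn) hBF
      ⟨t2, ⟨le_refl _, by linarith⟩, rfl⟩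
      ⟨t1 + L₁, ⟨by linarith, le_refl _⟩, hper t1⟩
  exact hne (hcp.symm.trans (hBcomp.symm.trans hcq))
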